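/- Assume the event T_α holds for some 0 < α < 1 and λ0 > 0. Let S = S1 ∪ S2 with S1 ∩ S2 = ∅, S1 ≠ ∅, s1 := |S1|, φ(6,S1) > 0 and ‖(b^S)_{S2}‖₁ > 0, and choose the tuning parameter λ := λ0^{2/(1+α)} · ‖(b^S)_{S2}‖₁^{−(1−α)/(1+α)}. Then ‖f̂ − f⁰‖_n² + λ‖β̂ − b^S‖₁ ≤ 56·λ0^{4/(1+α)}·‖(b^S)_{S2}‖₁^{−2(1−α)/(1+α)}·s1/φ²(6,S1) + (21/2)·λ0^{2/(1+α)}·‖(b^S)_{S2}‖₁^{2α/(1+α)} + 7‖ff_S − f⁰‖_n². -/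

import Mathlib

open Finset

noncomputable section

/-- Squared normalized norm: `‖v‖ₙ² = ‖v‖₂²/n`. -/
def nsq (n : ℕ) (v : Fin n → ℝ) : ℝ := (∑ i, v i ^ 2) / n

/-- Normalized norm `‖v‖ₙ`. -/
def nnorm (n : ℕ) (v : Fin n → ℝ) : ℝ := Real.sqrt (nsq n v)

/-- `ℓ₁`-norm of a coefficient vector. -/
def l1 {p : ℕ} (β : Fin p → ℝ) : ℝ := ∑ j, |β j|

/-- `f_β := ∑ⱼ βⱼ ψⱼ`. -/
def fvec {n p : ℕ} (ψ : Fin p → Fin n → ℝ) (β : Fin p → ℝ) : Fin n → ℝ :=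
  fun i => ∑ j, β j * ψ j i

/-- Restriction `β_S` of `β` to an index set `S`. -/
def restr {p : ℕ} (S : Finset (Fin p)) (β : Fin p → ℝ) : Fin p → ℝ :=
  fun j => if j ∈ S then β j else 0

/-- Compatibility constant `φ²(L,S)`. -/
def phiSq {n p : ℕ} (ψ : Fin p → Fin n → ℝ) (L : ℝ) (S : Finset (Fin p)) : ℝ :=
  sInf {x : ℝ | ∃ β : Fin p → ℝ, l1 (restr S β) = 1 ∧ l1 (β - restr S β) ≤ L ∧
    x = S.card * nsq n (fvec ψ (restr S β) - fvec ψ (β - restr S β))}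

/-- Covering number `N(δ, F, ‖·‖ₙ)`. -/
def covN (n : ℕ) (δ : ℝ) (F : Set (Fin n → ℝ)) : ℕ :=
  sInf {N : ℕ | ∃ g : Fin N → (Fin n → ℝ), ∀ f ∈ F, ∃ k, nnorm n (f - g k) ≤ δ}

/-!
With `δ = β̂ - b^S` and `M = ‖(b^S)_{S₂}‖₁`, comparing the Lasso objective at `β̂` and at `b^S`
leaves the noise term `2 εᵀ f_δ / n`, which `T_α` bounds by `λ₀ ‖f_δ‖ₙ^{1-α} ‖δ‖₁^α / 2`.
The choice of `λ` is exactly `λ₀ = λ^{(1+α)/2} M^{(1-α)/2}`, so weighted AM–GM with weights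
`(1-α)/2, (1-α)/2, α` splits this into `‖f_δ‖ₙ²/4 + λM/4 + λ‖δ‖₁/2`. Together with
`‖b^S‖₁ + ‖δ_{S₁ᶜ}‖₁ ≤ ‖β̂‖₁ + ‖δ_{S₁}‖₁ + 2M` this gives
`‖f̂ - f⁰‖ₙ²/2 + λ‖δ_{S₁ᶜ}‖₁/2 ≤ 3/2 ‖f_{b^S} - f⁰‖ₙ² + 9/4 λM + 3/2 λ‖δ_{S₁}‖₁`.
Either `‖δ_{S₁ᶜ}‖₁ ≤ 6 ‖δ_{S₁}‖₁`, and then `φ²(6,S₁) ‖δ_{S₁}‖₁² ≤ s₁ ‖f_δ‖ₙ²`, or the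
left-hand side absorbs `λ‖δ_{S₁}‖₁`.
-/

lemma sqrt_rpow_mul_le {α s lam M v : ℝ} (hα0 : 0 ≤ α) (hα1 : α ≤ 1) (hs : 0 ≤ s)
    (hlam : 0 ≤ lam) (hM : 0 ≤ M) (hv : 0 ≤ v) :
    √s ^ (1 - α) * (lam ^ ((1 + α) / 2) * M ^ ((1 - α) / 2)) * v ^ α ≤
      (1 - α) / 2 * s + (1 - α) / 2 * (lam * M) + α * (lam * v) := by
  have hsplit : lam ^ ((1 + α) / 2) = lam ^ ((1 - α) / 2) * lam ^ α := by
    rw [← Real.rpow_add' hlam (by linarith)]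
    ring_nf
  have hsqrt : √s ^ (1 - α) = s ^ ((1 - α) / 2) := by
    rw [Real.sqrt_eq_rpow, ← Real.rpow_mul hs]
    ring_nf
  calc √s ^ (1 - α) * (lam ^ ((1 + α) / 2) * M ^ ((1 - α) / 2)) * v ^ α
      = s ^ ((1 - α) / 2) * (lam * M) ^ ((1 - α) / 2) * (lam * v) ^ α := by
        rw [hsqrt, hsplit, Real.mul_rpow hlam hM, Real.mul_rpow hlam hv]
        ring
    _ ≤ _ := Real.geom_mean_le_arith_mean3_weighted (by linarith) (by linarith) hα0 hs
        (mul_nonneg hlam hM) (mul_nonneg hlam hv) (by ring)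

/-- The paper's tuning parameter `λ`, with `M = ‖(b^S)_{S₂}‖₁`. -/
def lassoLambda (α lam0 M : ℝ) : ℝ :=
  lam0 ^ (2 / (1 + α)) * M ^ (-(1 - α) / (1 + α))

section LassoLambda

variable {α lam0 M : ℝ}

lemma lassoLambda_pos (hlam0 : 0 < lam0) (hM : 0 < M) : 0 < lassoLambda α lam0 M := by
  unfold lassoLambda
  positivity

lemma lassoLambda_rpow_mul (hα : 0 < 1 + α) (hlam0 : 0 ≤ lam0) (hM : 0 < M) :
    lassoLambda α lam0 M ^ ((1 + α) / 2) * M ^ ((1 - α) / 2) = lam0 := by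
  rw [lassoLambda, Real.mul_rpow (by positivity) (by positivity), ← Real.rpow_mul hlam0,
    ← Real.rpow_mul hM.le, mul_assoc, ← Real.rpow_add hM]
  have h1 : 2 / (1 + α) * ((1 + α) / 2) = 1 := by field_simp
  have h2 : -(1 - α) / (1 + α) * ((1 + α) / 2) + (1 - α) / 2 = 0 := by field_simp; ring
  rw [h1, h2, Real.rpow_one, Real.rpow_zero, mul_one]

lemma lassoLambda_mul (hα : 0 < 1 + α) (hM : 0 < M) :
    lassoLambda α lam0 M * M = lam0 ^ (2 / (1 + α)) * M ^ (2 * α / (1 + α)) := by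
  rw [lassoLambda, mul_assoc, ← Real.rpow_add_one hM.ne']
  congr 2
  field_simp
  ring

lemma lassoLambda_sq (hlam0 : 0 ≤ lam0) (hM : 0 ≤ M) :
    lassoLambda α lam0 M ^ 2 = lam0 ^ (4 / (1 + α)) * M ^ (-(2 * (1 - α)) / (1 + α)) := by
  rw [lassoLambda, mul_pow, ← Real.rpow_natCast, ← Real.rpow_natCast, ← Real.rpow_mul hlam0,
    ← Real.rpow_mul hM]
  ring_nf

end LassoLambda

section

variable {n p : ℕ}

lemma l1_nonneg (β : Fin p → ℝ) : 0 ≤ l1 β :=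
  sum_nonneg fun _ _ => abs_nonneg _

lemma l1_smul (c : ℝ) (β : Fin p → ℝ) : l1 (c • β) = |c| * l1 β := by
  simp [l1, abs_mul, mul_sum]

lemma l1_neg (β : Fin p → ℝ) : l1 (-β) = l1 β := by
  simp [l1]

lemma l1_eq_l1_restr_add (S : Finset (Fin p)) (β : Fin p → ℝ) :
    l1 β = l1 (restr S β) + l1 (β - restr S β) := by
  rw [l1, l1, l1, ← sum_add_distrib]
  refine sum_congr rfl fun j _ => ?_
  by_cases hj : j ∈ S <;> simp [restr, hj]

lemma restr_smul (S : Finset (Fin p)) (c : ℝ) (β : Fin p → ℝ) :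
    restr S (c • β) = c • restr S β := by
  ext j
  by_cases hj : j ∈ S <;> simp [restr, hj]

lemma nsq_nonneg (v : Fin n → ℝ) : 0 ≤ nsq n v :=
  div_nonneg (sum_nonneg fun _ _ => sq_nonneg _) n.cast_nonneg

lemma nsq_smul (c : ℝ) (v : Fin n → ℝ) : nsq n (c • v) = c ^ 2 * nsq n v := by
  simp [nsq, mul_pow, ← mul_sum, mul_div_assoc]

lemma nsq_sub_le (x y : Fin n → ℝ) : nsq n (x - y) ≤ 2 * nsq n x + 2 * nsq n y := by
  rw [nsq, nsq, nsq, mul_div_assoc', mul_div_assoc', ← add_div, mul_sum, mul_sum,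
    ← sum_add_distrib]
  gcongr with i
  simp only [Pi.sub_apply]
  nlinarith [sq_nonneg (x i + y i)]

lemma fvec_eq_vecMul (ψ : Fin p → Fin n → ℝ) (β : Fin p → ℝ) :
    fvec ψ β = Matrix.vecMul β (Matrix.of ψ) :=
  rfl

lemma fvec_sub (ψ : Fin p → Fin n → ℝ) (β γ : Fin p → ℝ) :
    fvec ψ (β - γ) = fvec ψ β - fvec ψ γ := by
  simp only [fvec_eq_vecMul, Matrix.sub_vecMul]

lemma fvec_smul (ψ : Fin p → Fin n → ℝ) (c : ℝ) (β : Fin p → ℝ) :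
    fvec ψ (c • β) = c • fvec ψ β := by
  simp only [fvec_eq_vecMul, Matrix.smul_vecMul]

/-- Rescaling by `‖β_S‖₁⁻¹` puts `β` into the set whose infimum is `φ²(L,S)`. -/
lemma phiSq_mul_sq_le (ψ : Fin p → Fin n → ℝ) {L : ℝ} (S : Finset (Fin p)) (β : Fin p → ℝ)
    (hβ : l1 (β - restr S β) ≤ L * l1 (restr S β)) :
    phiSq ψ L S * l1 (restr S β) ^ 2 ≤
      S.card * nsq n (fvec ψ (restr S β) - fvec ψ (β - restr S β)) := by
  rcases (l1_nonneg (restr S β)).eq_or_lt with h0 | hpos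
  · rw [← h0]
    simpa using mul_nonneg S.card.cast_nonneg (nsq_nonneg _)
  set v := l1 (restr S β)
  have hS : restr S (v⁻¹ • β) = v⁻¹ • restr S β := restr_smul S v⁻¹ β
  have hSc : v⁻¹ • β - restr S (v⁻¹ • β) = v⁻¹ • (β - restr S β) := by rw [hS, smul_sub]
  have hmem : phiSq ψ L S ≤ S.card * (v⁻¹ ^ 2 *
      nsq n (fvec ψ (restr S β) - fvec ψ (β - restr S β))) := by
    refine csInf_le ⟨0, ?_⟩ ⟨v⁻¹ • β, ?_, ?_, ?_⟩
    · rintro x ⟨γ, -, -, rfl⟩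
      exact mul_nonneg S.card.cast_nonneg (nsq_nonneg _)
    · rw [hS, l1_smul, abs_of_pos (inv_pos.2 hpos), inv_mul_cancel₀ hpos.ne']
    · rw [hSc, l1_smul, abs_of_pos (inv_pos.2 hpos)]
      calc v⁻¹ * l1 (β - restr S β) ≤ v⁻¹ * (L * v) := by gcongr
        _ = L := by field_simp
    · rw [hSc, hS, fvec_smul, fvec_smul, ← smul_sub, nsq_smul, inv_pow]
  calc phiSq ψ L S * v ^ 2
      ≤ S.card * (v⁻¹ ^ 2 * nsq n (fvec ψ (restr S β) - fvec ψ (β - restr S β))) * v ^ 2 := by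
        gcongr
    _ = _ := by field_simp

/-- Flipping the sign of `δ` off `S` turns `f_{δ_S} - f_{δ_{Sᶜ}}` into `f_δ`. -/
lemma phiSq_mul_l1_restr_sq_le (ψ : Fin p → Fin n → ℝ) {L : ℝ} (S : Finset (Fin p))
    (δ : Fin p → ℝ) (hδ : l1 (δ - restr S δ) ≤ L * l1 (restr S δ)) :
    phiSq ψ L S * l1 (restr S δ) ^ 2 ≤ S.card * nsq n (fvec ψ δ) := by
  set γ : Fin p → ℝ := fun j => if j ∈ S then δ j else -δ j
  have hS : restr S γ = restr S δ := by
    ext j; by_cases hj : j ∈ S <;> simp [restr, γ, hj]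
  have hSc : γ - restr S γ = -(δ - restr S δ) := by
    ext j; by_cases hj : j ∈ S <;> simp [restr, γ, hj]
  have h := phiSq_mul_sq_le ψ S γ (by rwa [hSc, l1_neg, hS])
  rwa [hSc, hS, ← fvec_sub, sub_neg_eq_add, add_sub_cancel] at h

lemma lasso_basic_inequality (ψ : Fin p → Fin n → ℝ) (β0 : Fin p → ℝ) (ε : Fin n → ℝ)
    {lam : ℝ} {hatβ : Fin p → ℝ}
    (hmin : ∀ β : Fin p → ℝ,
      (∑ i, (fvec ψ β0 i + ε i - fvec ψ hatβ i) ^ 2) / n + lam * l1 hatβ ≤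
        (∑ i, (fvec ψ β0 i + ε i - fvec ψ β i) ^ 2) / n + lam * l1 β)
    (b : Fin p → ℝ) :
    nsq n (fvec ψ hatβ - fvec ψ β0) + lam * l1 hatβ ≤
      nsq n (fvec ψ b - fvec ψ β0) + lam * l1 b + 2 * (∑ i, ε i * fvec ψ (hatβ - b) i) / n := by
  have hexpand : ∀ c : Fin p → ℝ, (∑ i, (fvec ψ β0 i + ε i - fvec ψ c i) ^ 2) / n =
      nsq n (fvec ψ c - fvec ψ β0) - 2 * (∑ i, ε i * fvec ψ c i) / n +
        (∑ i, (2 * ε i * fvec ψ β0 i + ε i ^ 2)) / n := by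
    intro c
    rw [nsq, ← sub_div, ← add_div, mul_sum, ← sum_sub_distrib, ← sum_add_distrib]
    exact congrArg (· / (n : ℝ)) (sum_congr rfl fun i _ => by simp only [Pi.sub_apply]; ring)
  have hcross : ∑ i, ε i * fvec ψ (hatβ - b) i =
      ∑ i, ε i * fvec ψ hatβ i - ∑ i, ε i * fvec ψ b i := by
    simp only [fvec_sub, Pi.sub_apply, mul_sub, sum_sub_distrib]
  have h := hmin b
  rw [hexpand, hexpand] at h
  rw [hcross, mul_sub, sub_div]
  linarith

lemma l1_add_l1_sub_restr_le {S1 S2 : Finset (Fin p)} (hdisj : Disjoint S1 S2)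
    {b : Fin p → ℝ} (hb : ∀ j, j ∉ S1 ∪ S2 → b j = 0) (β : Fin p → ℝ) :
    l1 b + l1 (β - b - restr S1 (β - b)) ≤
      l1 β + l1 (restr S1 (β - b)) + 2 * l1 (restr S2 b) := by
  simp only [l1, mul_sum, ← sum_add_distrib]
  refine sum_le_sum fun j _ => ?_
  by_cases h1 : j ∈ S1
  · have h2 : j ∉ S2 := disjoint_left.mp hdisj h1
    simp only [restr, h1, h2, if_true, if_false, Pi.sub_apply, sub_self, abs_zero]
    linarith [abs_sub_abs_le_abs_sub (b j) (β j), abs_sub_comm (b j) (β j)]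
  · by_cases h2 : j ∈ S2
    · simp only [restr, h1, h2, if_true, if_false, Pi.sub_apply, sub_zero, abs_zero]
      linarith [abs_sub (β j) (b j)]
    · simp [restr, h1, h2, hb j (by simp [h1, h2])]

lemma add_le_of_cone_dichotomy {D B u lam M v1 v2 X : ℝ} (hD : 0 ≤ D) (hu0 : 0 ≤ u)
    (hlam : 0 ≤ lam) (hM : 0 ≤ M) (hv2 : 0 ≤ v2) (hX : 0 ≤ X) (hu : u ≤ 2 * D + 2 * B)
    (hmain : D / 2 + lam * v2 / 2 ≤ 3 / 2 * B + 9 / 4 * (lam * M) + 3 / 2 * (lam * v1))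
    (hcompat : v2 ≤ 6 * v1 → (lam * v1) ^ 2 ≤ X * u) :
    D + (lam * v1 + lam * v2) ≤ 56 * X + 21 / 2 * (lam * M) + 7 * B := by
  have hlM : 0 ≤ lam * M := mul_nonneg hlam hM
  have hlv2 : 0 ≤ lam * v2 := mul_nonneg hlam hv2
  rcases le_or_gt v2 (6 * v1) with hcone | hcone
  · have hv1 : lam * v1 ≤ 4 * X + u / 16 :=
      abs_le_of_sq_le_sq' (by nlinarith [hcompat hcone, sq_nonneg (4 * X - u / 16)])
        (by positivity) |>.2
    linarith
  · have h6 : lam * (6 * v1) ≤ lam * v2 := mul_le_mul_of_nonneg_left hcone.le hlam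
    linarith

lemma lasso_oracle_inequality (ψ : Fin p → Fin n → ℝ) (β0 : Fin p → ℝ) (ε : Fin n → ℝ)
    {α lam0 lam : ℝ} (hα0 : 0 ≤ α) (hα1 : α ≤ 1) (hlam : 0 < lam)
    {S1 S2 : Finset (Fin p)} (hdisj : Disjoint S1 S2) (hphi : 0 < phiSq ψ 6 S1)
    {bS : Fin p → ℝ} (hbS : ∀ j, j ∉ S1 ∪ S2 → bS j = 0)
    (hlam0 : lam0 = lam ^ ((1 + α) / 2) * l1 (restr S2 bS) ^ ((1 - α) / 2))
    (hT : ∀ β : Fin p → ℝ,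
      4 * |∑ i, ε i * fvec ψ β i| / n ≤ lam0 * nnorm n (fvec ψ β) ^ (1 - α) * l1 β ^ α)
    {hatβ : Fin p → ℝ}
    (hmin : ∀ β : Fin p → ℝ,
      (∑ i, (fvec ψ β0 i + ε i - fvec ψ hatβ i) ^ 2) / n + lam * l1 hatβ ≤
        (∑ i, (fvec ψ β0 i + ε i - fvec ψ β i) ^ 2) / n + lam * l1 β) :
    nsq n (fvec ψ hatβ - fvec ψ β0) + lam * l1 (hatβ - bS) ≤
      56 * (lam ^ 2 * S1.card / phiSq ψ 6 S1) + 21 / 2 * (lam * l1 (restr S2 bS))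
        + 7 * nsq n (fvec ψ bS - fvec ψ β0) := by
  set δ := hatβ - bS
  set M := l1 (restr S2 bS)
  set u := nsq n (fvec ψ δ)
  have hu : u ≤ 2 * nsq n (fvec ψ hatβ - fvec ψ β0) + 2 * nsq n (fvec ψ bS - fvec ψ β0) := by
    have h := nsq_sub_le (fvec ψ hatβ - fvec ψ β0) (fvec ψ bS - fvec ψ β0)
    rwa [sub_sub_sub_cancel_right, ← fvec_sub] at h
  have hcross : 2 * (∑ i, ε i * fvec ψ δ i) / n ≤ u / 4 + lam * M / 4 + lam * l1 δ / 2 := by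
    have hnoise : 2 * (∑ i, ε i * fvec ψ δ i) / n ≤ 4 * |∑ i, ε i * fvec ψ δ i| / n / 2 :=
      calc 2 * (∑ i, ε i * fvec ψ δ i) / n ≤ 2 * |∑ i, ε i * fvec ψ δ i| / n := by
            gcongr; exact le_abs_self _
        _ = 4 * |∑ i, ε i * fvec ψ δ i| / n / 2 := by ring
    have hyoung := sqrt_rpow_mul_le hα0 hα1 (nsq_nonneg (fvec ψ δ)) hlam.le
      (l1_nonneg (restr S2 bS)) (l1_nonneg δ)
    have hT' := hT δ
    rw [nnorm, hlam0] at hT'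
    linarith [mul_nonneg hα0 (nsq_nonneg (fvec ψ δ)),
      mul_nonneg hα0 (mul_nonneg hlam.le (l1_nonneg (restr S2 bS))),
      mul_nonneg (sub_nonneg.2 hα1) (mul_nonneg hlam.le (l1_nonneg δ))]
  have hcone : lam * (l1 bS + l1 (δ - restr S1 δ)) ≤ lam * (l1 hatβ + l1 (restr S1 δ) + 2 * M) :=
    mul_le_mul_of_nonneg_left (l1_add_l1_sub_restr_le hdisj hbS hatβ) hlam.le
  have hbasic : nsq n (fvec ψ hatβ - fvec ψ β0) + lam * l1 hatβ ≤
      nsq n (fvec ψ bS - fvec ψ β0) + lam * l1 bS + 2 * (∑ i, ε i * fvec ψ δ i) / n :=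
    lasso_basic_inequality ψ β0 ε hmin bS
  rw [l1_eq_l1_restr_add S1 δ, mul_add] at hcross ⊢
  refine add_le_of_cone_dichotomy (nsq_nonneg _) (nsq_nonneg _) hlam.le (l1_nonneg _)
    (l1_nonneg _) (by positivity) hu (by linarith) fun h => ?_
  have hcompat := phiSq_mul_l1_restr_sq_le ψ S1 δ h
  rw [div_mul_eq_mul_div, le_div_iff₀ hphi]
  nlinarith [mul_le_mul_of_nonneg_left hcompat (sq_nonneg lam)]

end

theorem stmt5_general {n p : ℕ}
    (ψ : Fin p → Fin n → ℝ)
    (β0 : Fin p → ℝ) (ε : Fin n → ℝ)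
    (α lam0 lam : ℝ) (hα0 : 0 < α) (hα1 : α < 1) (hlam0 : 0 < lam0)
    (S S1 S2 : Finset (Fin p)) (hS : S = S1 ∪ S2) (hdisj : Disjoint S1 S2)
    (hphi : 0 < phiSq ψ 6 S1)
    (bS : Fin p → ℝ) (hbS_supp : ∀ j, j ∉ S → bS j = 0)
    (hbSpos : 0 < l1 (restr S2 bS))
    (hlam : lam = lam0 ^ (2 / (1 + α)) * l1 (restr S2 bS) ^ (-(1 - α) / (1 + α)))
    (hT : ∀ β : Fin p → ℝ,
      4 * |∑ i, ε i * fvec ψ β i| / n ≤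
        lam0 * nnorm n (fvec ψ β) ^ (1 - α) * l1 β ^ α)
    (hatβ : Fin p → ℝ)
    (hmin : ∀ β : Fin p → ℝ,
      (∑ i, (fvec ψ β0 i + ε i - fvec ψ hatβ i) ^ 2) / n + lam * l1 hatβ ≤
        (∑ i, (fvec ψ β0 i + ε i - fvec ψ β i) ^ 2) / n + lam * l1 β)
 :
    nsq n (fvec ψ hatβ - fvec ψ β0) + lam * l1 (hatβ - bS) ≤
      56 * lam0 ^ (4 / (1 + α)) * l1 (restr S2 bS) ^ (-(2 * (1 - α)) / (1 + α))
          * S1.card / phiSq ψ 6 S1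
        + (21 / 2) * lam0 ^ (2 / (1 + α)) * l1 (restr S2 bS) ^ (2 * α / (1 + α))
        + 7 * nsq n (fvec ψ bS - fvec ψ β0) := by
  subst hS
  obtain rfl : lam = lassoLambda α lam0 (l1 (restr S2 bS)) := hlam
  have hα : 0 < 1 + α := by linarith
  calc _ ≤ _ := lasso_oracle_inequality ψ β0 ε hα0.le hα1.le (lassoLambda_pos hlam0 hbSpos)
        hdisj hphi hbS_supp (lassoLambda_rpow_mul hα hlam0.le hbSpos).symm hT hmin
    _ = _ := by
      rw [lassoLambda_sq hlam0.le hbSpos.le, lassoLambda_mul hα hbSpos]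
      ring

theorem stmt5 {n p : ℕ} (hn : 1 ≤ n) (hp : 1 ≤ p)
    (ψ : Fin p → Fin n → ℝ) (hψ : ∀ j, ∑ i, (ψ j i) ^ 2 ≤ (n : ℝ))
    (β0 : Fin p → ℝ) (ε : Fin n → ℝ)
    (α lam0 lam : ℝ) (hα0 : 0 < α) (hα1 : α < 1) (hlam0 : 0 < lam0)
    (S S1 S2 : Finset (Fin p)) (hS : S = S1 ∪ S2) (hdisj : Disjoint S1 S2)
    (hS1ne : S1.Nonempty) (hphi : 0 < phiSq ψ 6 S1)
    (bS : Fin p → ℝ) (hbS_supp : ∀ j, j ∉ S → bS j = 0)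
    (hbS_proj : ∀ b : Fin p → ℝ, (∀ j, j ∉ S → b j = 0) →
      nsq n (fvec ψ bS - fvec ψ β0) ≤ nsq n (fvec ψ b - fvec ψ β0))
    (hbSpos : 0 < l1 (restr S2 bS))
    (hlam : lam = lam0 ^ (2 / (1 + α)) * l1 (restr S2 bS) ^ (-(1 - α) / (1 + α)))
    (hT : ∀ β : Fin p → ℝ,
      4 * |∑ i, ε i * fvec ψ β i| / n ≤
        lam0 * nnorm n (fvec ψ β) ^ (1 - α) * l1 β ^ α)
    (hatβ : Fin p → ℝ)
    (hmin : ∀ β : Fin p → ℝ,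
      (∑ i, (fvec ψ β0 i + ε i - fvec ψ hatβ i) ^ 2) / n + lam * l1 hatβ ≤
        (∑ i, (fvec ψ β0 i + ε i - fvec ψ β i) ^ 2) / n + lam * l1 β)
 :
    nsq n (fvec ψ hatβ - fvec ψ β0) + lam * l1 (hatβ - bS) ≤
      56 * lam0 ^ (4 / (1 + α)) * l1 (restr S2 bS) ^ (-(2 * (1 - α)) / (1 + α))
          * S1.card / phiSq ψ 6 S1
        + (21 / 2) * lam0 ^ (2 / (1 + α)) * l1 (restr S2 bS) ^ (2 * α / (1 + α))
        + 7 * nsq n (fvec ψ bS - fvec ψ β0) :=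
  stmt5_general ψ β0 ε α lam0 lam hα0 hα1 hlam0 S S1 S2 hS hdisj hphi bS hbS_supp hbSpos hlam hT
    hatβ hmin
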